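/- Let d ≥ 1, A ≤ 0, and for g ∈ ℝ^d, z ∈ ℂ^d define Λ_g(z) = (1−4A)^{d/4}·exp(A‖g‖₂² + √(1−4A)·(Σ_{i=1}^d g_i z_i) − (Σ_{i=1}^d z_i²)/2) ∈ ℂ. Then for all x, w ∈ ℝ^d and b ∈ ℝ, cos(⟨x,w⟩ + b) = 𝔼_{g∼N(0,I_d)}[Re(exp(ib) · Λ_g(i·x) · Λ_g(w))], where i·x ∈ ℂ^d is the entrywise multiplication of x by the imaginary unit and Λ_g(w) is real. -/

import Mathlib

open MeasureTheory ProbabilityTheory Real RealInnerProductSpace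

/-- The standard Gaussian probability measure `N(0, I_d)` on `ℝ^d`. -/
noncomputable def stdGaussian (d : ℕ) : Measure (EuclideanSpace ℝ (Fin d)) :=
  (Measure.pi fun _ => gaussianReal 0 1).map (WithLp.toLp 2)

/-- The complex-valued positive random feature map
`Λ_g(z) = (1-4A)^{d/4} exp(A‖g‖² + √(1-4A)·Σ gᵢzᵢ − (Σ zᵢ²)/2)` for `g ∈ ℝ^d`, `z ∈ ℂ^d`. -/
noncomputable def lambdaC (d : ℕ) (A : ℝ) (g : EuclideanSpace ℝ (Fin d))
    (z : Fin d → ℂ) : ℂ :=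
  (((1 - 4 * A) ^ ((d : ℝ) / 4) : ℝ) : ℂ) *
    Complex.exp (((A * ‖g‖ ^ 2 : ℝ) : ℂ)
      + ((Real.sqrt (1 - 4 * A) : ℝ) : ℂ) * (∑ i, (g i : ℂ) * z i)
      - (∑ i, z i ^ 2) / 2)

/-!
Both `Λ_g(z)` and the Gaussian factor into coordinates: `Λ_g(z) = ∏ᵢ λ(gᵢ, zᵢ)`. For each coordinate,
`λ(t, ζ) λ(t, ξ)` is a multiple of `exp(2A t² + √(1-4A) (ζ + ξ) t)`, and completing the square in the
Gaussian integral gives `𝔼[λ(t, ζ) λ(t, ξ)] = exp(ζ ξ)` for all complex `ζ, ξ`, the normalisation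
`(1-4A)^{1/4}` cancelling exactly. Hence `𝔼[Λ_g(z) Λ_g(z')] = exp(Σᵢ zᵢ z'ᵢ)`; at `z = i x`, `z' = w`
this is `exp(i ⟨x, w⟩)`, and the real part of `exp(ib) exp(i⟨x, w⟩)` is `cos(⟨x, w⟩ + b)`.
-/

open Complex

lemma integrable_gaussianReal_iff {E : Type*} [NormedAddCommGroup E] [NormedSpace ℝ E]
    {μ : ℝ} {v : NNReal} {f : ℝ → E} (hv : v ≠ 0) :
    Integrable f (gaussianReal μ v) ↔ Integrable (fun x => gaussianPDFReal μ v x • f x) := by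
  rw [gaussianReal_of_var_ne_zero _ hv, integrable_withDensity_iff_integrable_smul'
    (measurable_gaussianPDF _ _) (ae_of_all _ fun _ => gaussianPDF_lt_top)]
  simp only [gaussianPDF, ENNReal.toReal_ofReal (gaussianPDFReal_nonneg _ _ _)]

lemma gaussianPDFReal_smul_cexp_quadratic (a : ℝ) (c : ℂ) (t : ℝ) :
    gaussianPDFReal 0 1 t • cexp (a * t ^ 2 + c * t) =
      (√(2 * π))⁻¹ • cexp ((a - 1 / 2) * t ^ 2 + c * t + 0) := by
  simp only [gaussianPDFReal, NNReal.coe_one, mul_one, sub_zero, add_zero, Complex.real_smul,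
    ofReal_mul, ofReal_exp, mul_assoc, ← Complex.exp_add]
  congr 2
  push_cast
  ring

section
variable {a : ℝ}

lemma integrable_cexp_quadratic_gaussianReal (ha : a < 1 / 2) (c : ℂ) :
    Integrable (fun t : ℝ => cexp (a * t ^ 2 + c * t)) (gaussianReal 0 1) := by
  rw [integrable_gaussianReal_iff one_ne_zero]
  simp_rw [gaussianPDFReal_smul_cexp_quadratic]
  exact (integrable_cexp_quadratic' (b := (a : ℂ) - 1 / 2) (by simp; linarith) c 0).smul
    (√(2 * π))⁻¹

lemma integral_cexp_quadratic_gaussianReal (ha : a < 1 / 2) (c : ℂ) :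
    ∫ t, cexp (a * t ^ 2 + c * t) ∂gaussianReal 0 1 =
      (√(1 - 2 * a) : ℂ)⁻¹ * cexp (c ^ 2 / (2 * (1 - 2 * a : ℝ))) := by
  have h : 0 < 1 - 2 * a := by linarith
  simp_rw [integral_gaussianReal_eq_integral_smul one_ne_zero,
    gaussianPDFReal_smul_cexp_quadratic, integral_smul]
  rw [integral_cexp_quadratic (b := (a : ℂ) - 1 / 2) (by simp; linarith), Complex.real_smul,
    show -((a : ℂ) - 1 / 2) = ((1 - 2 * a) / 2 : ℝ) by push_cast; ring, ← ofReal_div,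
    show (1 / 2 : ℂ) = ((1 / 2 : ℝ) : ℂ) by norm_num, ← ofReal_cpow (by positivity),
    ← sqrt_eq_rpow, ← mul_assoc, ← ofReal_mul]
  have hconst : (√(2 * π))⁻¹ * √(π / ((1 - 2 * a) / 2)) = (√(1 - 2 * a))⁻¹ := by
    rw [div_div_eq_mul_div, mul_comm π, sqrt_div' _ h.le]
    field_simp
  rw [hconst, show (4 : ℂ) * (a - ((1 / 2 : ℝ) : ℂ)) = -(2 * (1 - 2 * a)) by push_cast; ring,
    div_neg, sub_neg_eq_add, zero_add, ofReal_inv, ofReal_sub, ofReal_mul, ofReal_ofNat,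
    ofReal_one]
end

lemma integrable_stdGaussian_prod {𝕜 : Type*} [RCLike 𝕜] {d : ℕ} {f : Fin d → ℝ → 𝕜}
    (hf : ∀ i, Integrable (f i) (gaussianReal 0 1)) :
    Integrable (fun g : EuclideanSpace ℝ (Fin d) => ∏ i, f i (g i)) (stdGaussian d) := by
  rw [_root_.stdGaussian, ← MeasurableEquiv.coe_toLp, integrable_map_equiv]
  exact Integrable.fintype_prod hf

lemma integral_stdGaussian_prod {𝕜 : Type*} [RCLike 𝕜] {d : ℕ} (f : Fin d → ℝ → 𝕜) :
    ∫ g, ∏ i, f i (g i) ∂stdGaussian d = ∏ i, ∫ t, f i t ∂gaussianReal 0 1 := by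
  rw [_root_.stdGaussian, ← MeasurableEquiv.coe_toLp, integral_map_equiv]
  exact integral_fintype_prod_eq_prod f

noncomputable def lambdaFactor (A t : ℝ) (ζ : ℂ) : ℂ :=
  (((1 - 4 * A) ^ (1 / 4 : ℝ) : ℝ) : ℂ) *
    cexp (((A * t ^ 2 : ℝ) : ℂ) + (√(1 - 4 * A) : ℂ) * (t * ζ) - ζ ^ 2 / 2)

section
variable {d : ℕ} {A : ℝ}

open Finset in
lemma lambdaC_eq_prod_lambdaFactor (hA : A ≤ 1 / 4)
    (g : EuclideanSpace ℝ (Fin d)) (z : Fin d → ℂ) :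
    lambdaC d A g z = ∏ i, lambdaFactor A (g i) (z i) := by
  have hpow : (1 - 4 * A) ^ ((d : ℝ) / 4) = ((1 - 4 * A) ^ (1 / 4 : ℝ)) ^ d := by
    rw [← rpow_natCast, ← rpow_mul (by linarith)]
    ring_nf
  simp only [lambdaC, lambdaFactor, prod_mul_distrib, prod_const, card_univ, Fintype.card_fin,
    ← Complex.exp_sum, sum_add_distrib, sum_sub_distrib, ← mul_sum, ← sum_div,
    EuclideanSpace.real_norm_sq_eq, hpow]
  push_cast
  rw [mul_sum]

lemma lambdaFactor_mul_lambdaFactor (hA : A < 1 / 4) (t : ℝ) (ζ ξ : ℂ) :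
    lambdaFactor A t ζ * lambdaFactor A t ξ =
      (√(1 - 4 * A) * cexp (-(ζ ^ 2 + ξ ^ 2) / 2)) *
        cexp (((2 * A : ℝ) : ℂ) * t ^ 2 + √(1 - 4 * A) * (ζ + ξ) * t) := by
  have hsqrt : (1 - 4 * A) ^ (1 / 4 : ℝ) * (1 - 4 * A) ^ (1 / 4 : ℝ) = √(1 - 4 * A) := by
    rw [← rpow_add (by linarith), sqrt_eq_rpow]
    norm_num
  rw [lambdaFactor, lambdaFactor, mul_mul_mul_comm, ← ofReal_mul, hsqrt, mul_assoc,
    ← Complex.exp_add, ← Complex.exp_add]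
  congr 2
  push_cast
  ring

lemma integrable_lambdaFactor_mul_lambdaFactor (hA : A < 1 / 4) (ζ ξ : ℂ) :
    Integrable (fun t => lambdaFactor A t ζ * lambdaFactor A t ξ) (gaussianReal 0 1) := by
  simp_rw [lambdaFactor_mul_lambdaFactor hA]
  exact (integrable_cexp_quadratic_gaussianReal (by linarith) _).const_mul _

lemma integral_lambdaFactor_mul_lambdaFactor (hA : A < 1 / 4) (ζ ξ : ℂ) :
    ∫ t, lambdaFactor A t ζ * lambdaFactor A t ξ ∂gaussianReal 0 1 = cexp (ζ * ξ) := by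
  have h : 0 < 1 - 4 * A := by linarith
  have hsqrt : (√(1 - 4 * A) : ℂ) ≠ 0 := ofReal_ne_zero.mpr (sqrt_pos.mpr h).ne'
  have hsq : (√(1 - 4 * A) : ℂ) ^ 2 = (1 - 4 * A : ℝ) := by rw [← ofReal_pow, sq_sqrt h.le]
  simp_rw [lambdaFactor_mul_lambdaFactor hA]
  rw [integral_const_mul, integral_cexp_quadratic_gaussianReal (by linarith),
    show 1 - 2 * (2 * A) = 1 - 4 * A by ring, mul_comm _ (cexp _), mul_assoc, ← mul_assoc _ (_⁻¹),
    mul_inv_cancel₀ hsqrt, one_mul, ← Complex.exp_add, mul_pow, hsq, mul_comm (2 : ℂ),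
    mul_div_mul_left _ _ (ofReal_ne_zero.mpr h.ne')]
  congr 1
  ring

lemma lambdaC_mul_lambdaC (hA : A ≤ 1 / 4) (z z' : Fin d → ℂ) (g : EuclideanSpace ℝ (Fin d)) :
    lambdaC d A g z * lambdaC d A g z' =
      ∏ i, lambdaFactor A (g i) (z i) * lambdaFactor A (g i) (z' i) := by
  rw [lambdaC_eq_prod_lambdaFactor hA, lambdaC_eq_prod_lambdaFactor hA, Finset.prod_mul_distrib]

lemma integrable_lambdaC_mul_lambdaC (hA : A < 1 / 4) (z z' : Fin d → ℂ) :
    Integrable (fun g => lambdaC d A g z * lambdaC d A g z') (stdGaussian d) := by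
  simp_rw [lambdaC_mul_lambdaC hA.le]
  exact integrable_stdGaussian_prod fun i => integrable_lambdaFactor_mul_lambdaFactor hA _ _

lemma integral_lambdaC_mul_lambdaC (hA : A < 1 / 4) (z z' : Fin d → ℂ) :
    ∫ g, lambdaC d A g z * lambdaC d A g z' ∂stdGaussian d = cexp (∑ i, z i * z' i) := by
  simp_rw [lambdaC_mul_lambdaC hA.le]
  rw [integral_stdGaussian_prod fun i t => lambdaFactor A t (z i) * lambdaFactor A t (z' i)]
  simp_rw [integral_lambdaFactor_mul_lambdaFactor hA, Complex.exp_sum]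
end

theorem stmt_13_general (d : ℕ) (A : ℝ) (hA : A ≤ 0)
    (x w : EuclideanSpace ℝ (Fin d)) (b : ℝ) :
    Real.cos (⟪x, w⟫ + b) =
      ∫ g, (Complex.exp (Complex.I * b) *
          lambdaC d A g (fun j => Complex.I * (x j : ℂ)) *
          lambdaC d A g (fun j => ((w j : ℝ) : ℂ))).re ∂(stdGaussian d) := by
  have hA' : A < 1 / 4 := by linarith
  have hinner : ∑ j, I * (x j : ℂ) * (w j : ℂ) = I * (⟪x, w⟫ : ℝ) := by
    simp [PiLp.inner_apply, Finset.mul_sum, mul_comm, mul_assoc]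
  simp_rw [mul_assoc (cexp _), ← RCLike.re_to_complex]
  rw [integral_re ((integrable_lambdaC_mul_lambdaC hA' _ _).const_mul _), integral_const_mul,
    integral_lambdaC_mul_lambdaC hA', hinner, ← Complex.exp_add, RCLike.re_to_complex,
    ← mul_add, mul_comm, ← ofReal_add, exp_ofReal_mul_I_re, add_comm]

theorem stmt_13 (d : ℕ) (hd : 1 ≤ d) (A : ℝ) (hA : A ≤ 0)
    (x w : EuclideanSpace ℝ (Fin d)) (b : ℝ) :
    Real.cos (⟪x, w⟫ + b) =
      ∫ g, (Complex.exp (Complex.I * b) *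
          lambdaC d A g (fun j => Complex.I * (x j : ℂ)) *
          lambdaC d A g (fun j => ((w j : ℝ) : ℂ))).re ∂(stdGaussian d) :=
  stmt_13_general d A hA x w b
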